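/- Consider the Hadamard-product construction with null-space constraints: given an assignment matrix A ∈ ℝ^{k×n} with n = mk and vectors v_1, …, v_m ∈ ℝ^n as in Algorithm 1 (v_j(𝓗_i) ≠ 0 for every row support 𝓗_i, and for j ≥ 2, v_j is a nonzero vector in the common null space of A_1,…,A_{j−1}), let B^T = [A_1^T | … | A_m^T]. Then for every i ∈ {1,…,m}, A_j v_i = 1_k if j = i and A_j v_i = 0_k if j ≠ i; consequently B v_i = f_i for all i ∈ {1,…,m}, so in the absence of stragglers (𝓕 = {1,…,n}) the exact gradient is recovered, i.e. Err_{[n]}(B) = 0. -/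

import Mathlib

/-!
Row `i` of `A_j u` is `⟨v_j, u⟩_{𝓗_i} / ‖v_j‖²_{𝓗_i}`, an inner product restricted to the row
support `𝓗_i`. It is `1` for `u = v_j` (the support condition makes the denominator positive),
and since the restricted inner product is symmetric it vanishes for `u = v_{j'}` as soon as
`A_j v_{j'} = 0` or `A_{j'} v_j = 0`; the null-space constraints give one of the two for every
`j ≠ j'`. Stacking the blocks, `B v_i = f_i`, so `R = [v_1 | … | v_m]` decodes exactly.
-/

open MeasureTheory Matrix

noncomputable section

/-- Random-diagonal encoding matrix: the vertical stack of `A * D_1, …, A * D_m`,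
with rows indexed by `Fin m × κ` (block `i`, row `r`). -/
def encB {m : ℕ} {κ ν : Type*} (A : Matrix κ ν ℝ) (d : (Fin m × ν) → ℝ) :
    Matrix (Fin m × κ) ν ℝ :=
  Matrix.of fun p j => A p.2 j * d (p.1, j)

/-- The target matrix `F = [f_1 | … | f_m]`, where `f_i` is `1` on the `i`-th block. -/
def Fmat (m : ℕ) (κ : Type*) : Matrix (Fin m × κ) (Fin m) ℝ :=
  Matrix.of fun p i => if p.1 = i then 1 else 0

/-- Column submatrix corresponding to the non-straggler set `𝓕`. -/
def subCols {α ν : Type*} (M : Matrix α ν ℝ) (𝓕 : Finset ν) : Matrix α ↥𝓕 ℝ :=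
  M.submatrix id (fun j => (j : ν))

/-- Squared Frobenius norm. -/
def frobSq {α β : Type*} [Fintype α] [Fintype β] (M : Matrix α β ℝ) : ℝ :=
  ∑ i, ∑ j, (M i j) ^ 2

/-- The approximation error `Err_𝓕(B) = inf_R ‖B_𝓕 R − F‖_F²`. -/
noncomputable def err {m : ℕ} {κ ν : Type*} [Fintype κ] [Fintype ν]
    (B : Matrix (Fin m × κ) ν ℝ) (𝓕 : Finset ν) : ℝ :=
  ⨅ R : Matrix ↥𝓕 (Fin m) ℝ, frobSq (subCols B 𝓕 * R - Fmat m κ)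

/-- The matrix `A_j` of Algorithm 1: row `i` is supported on `𝓗_i = supp(A(i,:))`,
where it equals `w(𝓗_i)ᵀ / ‖w(𝓗_i)‖₂²`. -/
noncomputable def hadRow {k n : ℕ} (A : Matrix (Fin k) (Fin n) ℝ) (w : Fin n → ℝ) :
    Matrix (Fin k) (Fin n) ℝ :=
  Matrix.of fun i l =>
    if A i l = 0 then 0 else w l / ∑ l', if A i l' = 0 then 0 else (w l') ^ 2

/-- Vertical stacking of the matrices `A_1, …, A_m`. -/
def stackB {m : ℕ} {κ ν : Type*} (Am : Fin m → Matrix κ ν ℝ) :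
    Matrix (Fin m × κ) ν ℝ :=
  Matrix.of fun p l => Am p.1 p.2 l

/-- The paper's `w(𝓗_i)ᵀ u(𝓗_i)`, with `𝓗_i = supp(A(i,:))`. -/
def rowInner {k n : ℕ} (A : Matrix (Fin k) (Fin n) ℝ) (i : Fin k) (w u : Fin n → ℝ) : ℝ :=
  ∑ l, if A i l = 0 then 0 else w l * u l

section HadRow

variable {k n : ℕ} (A : Matrix (Fin k) (Fin n) ℝ)

theorem rowInner_comm (i : Fin k) (w u : Fin n → ℝ) : rowInner A i w u = rowInner A i u w := by
  simp only [rowInner, mul_comm]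

theorem rowInner_self_pos {i : Fin k} {w : Fin n → ℝ} (h : ∃ l, A i l ≠ 0 ∧ w l ≠ 0) :
    0 < rowInner A i w w := by
  obtain ⟨l, hA, hw⟩ := h
  refine Finset.sum_pos' (fun l' _ => ?_) ⟨l, Finset.mem_univ l, ?_⟩
  · split_ifs
    · exact le_rfl
    · exact mul_self_nonneg _
  · rw [if_neg hA]
    exact mul_self_pos.mpr hw

theorem hadRow_mulVec_apply (w u : Fin n → ℝ) (i : Fin k) :
    (hadRow A w *ᵥ u) i = rowInner A i w u / rowInner A i w w := by
  simp only [hadRow, rowInner, mulVec, dotProduct, Matrix.of_apply, Finset.sum_div, sq]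
  refine Finset.sum_congr rfl fun l _ => ?_
  split_ifs <;> ring

theorem hadRow_mulVec_self {w : Fin n → ℝ} (hw : ∀ i, ∃ l, A i l ≠ 0 ∧ w l ≠ 0) :
    hadRow A w *ᵥ w = 1 := by
  funext i
  rw [hadRow_mulVec_apply, div_self (rowInner_self_pos A (hw i)).ne', Pi.one_apply]

theorem hadRow_mulVec_eq_zero_iff {w : Fin n → ℝ} (hw : ∀ i, ∃ l, A i l ≠ 0 ∧ w l ≠ 0)
    (u : Fin n → ℝ) : hadRow A w *ᵥ u = 0 ↔ ∀ i, rowInner A i w u = 0 := by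
  simp only [funext_iff, hadRow_mulVec_apply, Pi.zero_apply, div_eq_zero_iff,
    (rowInner_self_pos A (hw _)).ne', or_false]

/-- Orthogonality on every row support is symmetric, so the null-space constraints imposed
on later vectors also annihilate earlier ones. -/
theorem hadRow_mulVec_eq_zero_symm {w u : Fin n → ℝ} (hw : ∀ i, ∃ l, A i l ≠ 0 ∧ w l ≠ 0)
    (hu : ∀ i, ∃ l, A i l ≠ 0 ∧ u l ≠ 0) (h : hadRow A w *ᵥ u = 0) : hadRow A u *ᵥ w = 0 := by
  rw [hadRow_mulVec_eq_zero_iff A hw] at h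
  rw [hadRow_mulVec_eq_zero_iff A hu]
  exact fun i => rowInner_comm A i u w ▸ h i

end HadRow

theorem stackB_mulVec_apply {m : ℕ} {κ ν : Type*} [Fintype ν] (M : Fin m → Matrix κ ν ℝ)
    (x : ν → ℝ) (p : Fin m × κ) : (stackB M *ᵥ x) p = (M p.1 *ᵥ x) p.2 :=
  rfl

theorem frobSq_nonneg {α β : Type*} [Fintype α] [Fintype β] (M : Matrix α β ℝ) :
    0 ≤ frobSq M :=
  Finset.sum_nonneg fun _ _ => Finset.sum_nonneg fun _ _ => sq_nonneg _

theorem err_eq_zero_of_mul_eq {m : ℕ} {κ ν : Type*} [Fintype κ] [Fintype ν]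
    {B : Matrix (Fin m × κ) ν ℝ} {𝓕 : Finset ν} {R : Matrix 𝓕 (Fin m) ℝ}
    (hR : subCols B 𝓕 * R = Fmat m κ) : err B 𝓕 = 0 := by
  refine le_antisymm ?_ (le_ciInf fun R' => frobSq_nonneg _)
  calc err B 𝓕 ≤ frobSq (subCols B 𝓕 * R - Fmat m κ) :=
        ciInf_le ⟨0, by rintro _ ⟨R', rfl⟩; exact frobSq_nonneg _⟩ R
    _ = 0 := by simp [hR, frobSq]

/-- The exact decoder is `R = [x_1 | … | x_m]`. -/
theorem err_univ_eq_zero_of_mulVec_eq {m : ℕ} {κ ν : Type*} [Fintype κ] [Fintype ν]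
    {B : Matrix (Fin m × κ) ν ℝ} (x : Fin m → ν → ℝ)
    (hx : ∀ i, B *ᵥ x i = fun p => if p.1 = i then (1 : ℝ) else 0) :
    err B Finset.univ = 0 := by
  refine err_eq_zero_of_mul_eq (R := Matrix.of fun l i => x i l) ?_
  ext p i
  have := congrFun (hx i) p
  simp only [mulVec, dotProduct] at this
  simpa only [subCols, mul_apply, submatrix_apply, id, Fmat, of_apply,
    Finset.sum_coe_sort Finset.univ fun l => B p l * x i l] using this

theorem stmt5_general (k m : ℕ)
    (A : Matrix (Fin k) (Fin (m * k)) ℝ) (v : Fin m → Fin (m * k) → ℝ)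
    (hsupp : ∀ (j : Fin m) (i : Fin k), ∃ l, A i l ≠ 0 ∧ v j l ≠ 0)
    (hnull : ∀ j : Fin m, 0 < (j : ℕ) →
      v j ≠ 0 ∧ ∀ j' : Fin m, (j' : ℕ) < (j : ℕ) → hadRow A (v j') *ᵥ v j = 0) :
    (∀ i j : Fin m, hadRow A (v j) *ᵥ v i = fun _ => if j = i then (1 : ℝ) else 0) ∧
    (∀ i : Fin m,
      stackB (fun u => hadRow A (v u)) *ᵥ v i = fun p => if p.1 = i then (1 : ℝ) else 0) ∧
    err (stackB fun u => hadRow A (v u)) (Finset.univ : Finset (Fin (m * k))) = 0 := by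
  have hnull' (j j' : Fin m) (h : j' < j) : hadRow A (v j') *ᵥ v j = 0 :=
    (hnull j (Nat.zero_lt_of_lt h)).2 j' h
  have hA (i j : Fin m) : hadRow A (v j) *ᵥ v i = fun _ => if j = i then (1 : ℝ) else 0 := by
    rcases lt_trichotomy j i with h | rfl | h
    · simp only [if_neg h.ne]
      exact hnull' i j h
    · simp only [if_true]
      exact hadRow_mulVec_self A (hsupp j)
    · simp only [if_neg h.ne']
      exact hadRow_mulVec_eq_zero_symm A (hsupp i) (hsupp j) (hnull' j i h)
  have hB (i : Fin m) :
      stackB (fun u => hadRow A (v u)) *ᵥ v i = fun p => if p.1 = i then (1 : ℝ) else 0 := by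
    funext p
    rw [stackB_mulVec_apply, hA]
  exact ⟨hA, hB, err_univ_eq_zero_of_mulVec_eq v hB⟩

/-- first part of Lemma 2: the Hadamard-product construction with
null-space constraints satisfies `A_j v_i = δ_{ij} 1_k`, hence `B v_i = f_i` and
exact recovery with no stragglers. -/
theorem stmt5 (k m : ℕ) (hm : 1 < m)
    (A : Matrix (Fin k) (Fin (m * k)) ℝ) (v : Fin m → Fin (m * k) → ℝ)
    (hsupp : ∀ (j : Fin m) (i : Fin k), ∃ l, A i l ≠ 0 ∧ v j l ≠ 0)
    (hnull : ∀ j : Fin m, 0 < (j : ℕ) →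
      v j ≠ 0 ∧ ∀ j' : Fin m, (j' : ℕ) < (j : ℕ) → hadRow A (v j') *ᵥ v j = 0) :
    (∀ i j : Fin m, hadRow A (v j) *ᵥ v i = fun _ => if j = i then (1 : ℝ) else 0) ∧
    (∀ i : Fin m,
      stackB (fun u => hadRow A (v u)) *ᵥ v i = fun p => if p.1 = i then (1 : ℝ) else 0) ∧
    err (stackB fun u => hadRow A (v u)) (Finset.univ : Finset (Fin (m * k))) = 0 :=
  stmt5_general k m A v hsupp hnull

end
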